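/- arXiv:2110.01703 — 4 statements merged into one kernel-verified Lean document; each statement's English description precedes it below -/
import Mathlib

section
/- Let u, v ∈ ℤ² be primitive vectors with det(u, v) ≠ 0 (the determinant of the 2×2 matrix with columns u and v), let p, q ∈ ℝ², and let π : ℝ² → ℝ²/ℤ² be the quotient map. Let L₁ = {p + t·u : t ∈ ℝ} and L₂ = {q + t·v : t ∈ ℝ}. Then the intersection π(L₁) ∩ π(L₂) of the two closed geodesics on the torus is a finite set with exactly |det(u, v)| elements. -/
/-- The integer lattice `ℤ² ⊆ ℝ²` as an additive subgroup of `Fin 2 → ℝ`. -/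
def intLattice : AddSubgroup (Fin 2 → ℝ) where
  carrier := {x | ∀ i, ∃ m : ℤ, x i = (m : ℝ)}
  zero_mem' := fun i => ⟨0, by simp⟩
  add_mem' := by
    intro a b ha hb i
    obtain ⟨p, hp⟩ := ha i
    obtain ⟨q, hq⟩ := hb i
    exact ⟨p + q, by simp [hp, hq]⟩
  neg_mem' := by
    intro a ha i
    obtain ⟨p, hp⟩ := ha i
    exact ⟨-p, by simp [hp]⟩

/-- The torus `ℝ²/ℤ²`. -/
abbrev Torus2 : Type := (Fin 2 → ℝ) ⧸ intLattice

/-- The quotient map `π : ℝ² → ℝ²/ℤ²`. -/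
def torusMk : (Fin 2 → ℝ) → Torus2 := QuotientAddGroup.mk

/-- The closed geodesic on the torus with base point `p ∈ ℝ²` and direction `u ∈ ℤ²`:
the image `π({p + t·u : t ∈ ℝ})`. -/
def torusGeodesic (p : Fin 2 → ℝ) (u : Fin 2 → ℤ) : Set Torus2 :=
  torusMk '' {x : Fin 2 → ℝ | ∃ t : ℝ, x = p + t • (fun i => (u i : ℝ))}

lemma mem_intLattice {x : Fin 2 → ℝ} : x ∈ intLattice ↔ ∀ i, ∃ m : ℤ, x i = (m : ℝ) :=
  Iff.rfl

lemma torusMk_eq_iff {a b : Fin 2 → ℝ} : torusMk a = torusMk b ↔ -a + b ∈ intLattice :=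
  QuotientAddGroup.eq

/-- If `u` is primitive and `c * u i` is an integer for each `i`, then `c` is an integer. -/
lemma prim_scalar {u : Fin 2 → ℤ} (hu : Int.gcd (u 0) (u 1) = 1) {c : ℝ}
    (h : ∀ i, ∃ m : ℤ, c * (u i : ℝ) = (m : ℝ)) : ∃ n : ℤ, c = (n : ℝ) := by
  obtain ⟨a, b, hab⟩ := Int.isCoprime_iff_gcd_eq_one.mpr hu
  obtain ⟨m0, h0⟩ := h 0
  obtain ⟨m1, h1⟩ := h 1
  refine ⟨a * m0 + b * m1, ?_⟩
  have key : ((a * u 0 + b * u 1 : ℤ) : ℝ) = 1 := by rw [hab]; norm_num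
  push_cast at key ⊢
  linear_combination (-c) * key + (a : ℝ) * h0 + (b : ℝ) * h1

/-- Two closed geodesics on the torus with primitive directions `u, v`
satisfying `det(u, v) ≠ 0` intersect in exactly `|det(u, v)|` points. -/
theorem stmt_2 (u v : Fin 2 → ℤ) (hu : Int.gcd (u 0) (u 1) = 1)
    (hv : Int.gcd (v 0) (v 1) = 1) (hdet : u 0 * v 1 - u 1 * v 0 ≠ 0)
    (p q : Fin 2 → ℝ) :
    (torusGeodesic p u ∩ torusGeodesic q v).Finite ∧
      (torusGeodesic p u ∩ torusGeodesic q v).ncard = (u 0 * v 1 - u 1 * v 0).natAbs := by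
  set Dz : ℤ := u 0 * v 1 - u 1 * v 0 with hDz
  set d : ℕ := Dz.natAbs with hd
  have hd0 : 0 < d := Int.natAbs_pos.mpr hdet
  have hD : ((Dz : ℝ)) ≠ 0 := Int.cast_ne_zero.mpr hdet
  set c : ℝ := (q 0 - p 0) * (v 1 : ℝ) - (q 1 - p 1) * (v 0 : ℝ) with hc
  set f : ℤ → Torus2 :=
    fun k => torusMk (p + (((k : ℝ) + c) / (Dz : ℝ)) • (fun i => (u i : ℝ))) with hf
  -- every f k lies in the intersection
  have hmem : ∀ k : ℤ, f k ∈ torusGeodesic p u ∩ torusGeodesic q v := by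
    intro k
    constructor
    · exact ⟨_, ⟨_, rfl⟩, rfl⟩
    · -- choose m ∈ ℤ² with m0 * v1 - m1 * v0 = k
      obtain ⟨a, b, hab⟩ := Int.isCoprime_iff_gcd_eq_one.mpr hv
      obtain ⟨m0, m1, hk⟩ : ∃ m0 m1 : ℤ, m0 * v 1 - m1 * v 0 = k :=
        ⟨k * b, -(k * a), by linear_combination k * hab⟩
      set s : ℝ := ((u 1 : ℝ) * ((q 0 - p 0) + m0) - (u 0 : ℝ) * ((q 1 - p 1) + m1)) / (Dz : ℝ)
        with hs
      refine ⟨q + s • (fun i => (v i : ℝ)), ⟨s, rfl⟩, ?_⟩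
      show torusMk _ = f k
      rw [hf, torusMk_eq_iff]
      have hkR : (m0 : ℝ) * (v 1 : ℝ) - (m1 : ℝ) * (v 0 : ℝ) = (k : ℝ) := by
        exact_mod_cast congrArg (fun z : ℤ => (z : ℝ)) hk
      have key : ∀ i : Fin 2, (((k : ℝ) + c) / (Dz : ℝ)) * (u i : ℝ) - s * (v i : ℝ)
          = (q i - p i) + (if i = 0 then (m0 : ℝ) else (m1 : ℝ)) := by
        intro i
        rw [hs, hc, div_mul_eq_mul_div, div_mul_eq_mul_div, div_sub_div_same, div_eq_iff hD]
        fin_cases i <;> simp only [Fin.isValue, if_true, if_false, reduceIte]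
        · rw [hDz]
          push_cast
          linear_combination (-((u 0 : ℝ)) : ℝ) * hkR
        · rw [hDz]
          push_cast
          linear_combination (-((u 1 : ℝ)) : ℝ) * hkR
      intro i
      obtain hi0 | hi1 : i = 0 ∨ i = 1 := by fin_cases i <;> simp
      · refine ⟨m0, ?_⟩
        have := key 0
        simp only [if_pos rfl, if_true] at this
        subst hi0
        simp only [Pi.add_apply, Pi.neg_apply, Pi.smul_apply, smul_eq_mul]
        linarith [this]
      · refine ⟨m1, ?_⟩
        have := key 1
        rw [if_neg (by decide)] at this
        subst hi1
        simp only [Pi.add_apply, Pi.neg_apply, Pi.smul_apply, smul_eq_mul]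
        linarith [this]
  -- every point of the intersection is some f k
  have hsubset : ∀ x ∈ torusGeodesic p u ∩ torusGeodesic q v, ∃ k : ℤ, x = f k := by
    intro x ⟨⟨y1, ⟨t, ht⟩, hy1⟩, ⟨y2, ⟨s, hs⟩, hy2⟩⟩
    subst ht hs
    have heq : torusMk (p + t • (fun i => (u i : ℝ))) = torusMk (q + s • (fun i => (v i : ℝ))) := by
      rw [hy1, hy2]
    rw [torusMk_eq_iff] at heq
    obtain ⟨n0, h0⟩ := heq 0
    obtain ⟨n1, h1⟩ := heq 1
    simp only [Pi.add_apply, Pi.neg_apply, Pi.smul_apply, smul_eq_mul] at h0 h1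
    refine ⟨n1 * v 0 - n0 * v 1, ?_⟩
    rw [← hy1, hf]
    congr 2
    have ht' : t = (((n1 * v 0 - n0 * v 1 : ℤ) : ℝ) + c) / (Dz : ℝ) := by
      rw [eq_div_iff hD, hc, hDz]
      push_cast
      linear_combination (-(v 1 : ℝ)) * h0 + (v 0 : ℝ) * h1
    rw [← ht']
  -- f k = f k' iff d ∣ k - k'
  have hper : ∀ k k' : ℤ, f k = f k' ↔ (d : ℤ) ∣ (k - k') := by
    intro k k'
    rw [hf, torusMk_eq_iff]
    constructor
    · intro h
      have h' : ∀ i, ∃ m : ℤ, (((k' : ℝ) - k) / (Dz : ℝ)) * (u i : ℝ) = (m : ℝ) := by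
        intro i
        obtain ⟨m, hm⟩ := h i
        refine ⟨m, ?_⟩
        simp only [Pi.add_apply, Pi.neg_apply, Pi.smul_apply, smul_eq_mul] at hm
        rw [← hm]; ring
      obtain ⟨n, hn⟩ := prim_scalar hu h'
      have : (k' : ℝ) - k = n * Dz := by
        field_simp at hn; linarith [hn]
      have hz : k' - k = n * Dz := by exact_mod_cast this
      rw [hd]
      refine Int.natAbs_dvd.mpr ?_
      exact ⟨-n, by linear_combination -hz⟩
    · rintro ⟨e, he⟩
      have hdvd : Dz ∣ k' - k := by
        have h1 : Dz ∣ k - k' := Int.natAbs_dvd.mp ⟨e, by rw [hd] at he; exact he⟩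
        have h2 : Dz ∣ -(k - k') := dvd_neg.mpr h1
        rwa [neg_sub] at h2
      obtain ⟨e', hke⟩ := hdvd
      have hR : ((k' : ℝ)) - k = (Dz : ℝ) * e' := by exact_mod_cast hke
      have h2 : ((k' : ℝ) + c) / (Dz : ℝ) - ((k : ℝ) + c) / (Dz : ℝ) = (e' : ℝ) := by
        rw [div_sub_div_same, div_eq_iff hD]
        linarith [hR]
      intro i
      refine ⟨e' * u i, ?_⟩
      simp only [Pi.add_apply, Pi.neg_apply, Pi.smul_apply, smul_eq_mul]
      push_cast
      linear_combination ((u i : ℝ)) * h2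
  -- the intersection is the range of F : Fin d → Torus2
  set F : Fin d → Torus2 := fun j => f (j : ℤ) with hF
  have hrange : torusGeodesic p u ∩ torusGeodesic q v = Set.range F := by
    apply Set.eq_of_subset_of_subset
    · intro x hx
      obtain ⟨k, hk⟩ := hsubset x hx
      have hmod : 0 ≤ k % (d : ℤ) := Int.emod_nonneg k (by exact_mod_cast hd0.ne')
      have hlt : k % (d : ℤ) < d := Int.emod_lt_of_pos k (by exact_mod_cast hd0)
      refine ⟨⟨(k % (d : ℤ)).toNat, by omega⟩, ?_⟩
      rw [hF]
      have : ((((k % (d : ℤ)).toNat : ℕ) : ℤ)) = k % (d : ℤ) := Int.toNat_of_nonneg hmod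
      simp only [this]
      rw [hk]
      refine ((hper _ _).mpr ?_).symm
      have := Int.mul_ediv_add_emod k (d : ℤ)
      exact ⟨k / d, by omega⟩
    · rintro x ⟨j, rfl⟩
      exact hmem _
  have hinj : Function.Injective F := by
    intro j j' h
    rw [hF] at h
    have := (hper _ _).mp h
    have hj := j.isLt
    have hj' := j'.isLt
    have : ((j : ℤ) - (j' : ℤ)) = 0 := by
      refine Int.eq_zero_of_abs_lt_dvd this ?_
      rw [abs_lt]; omega
    ext
    omega
  constructor
  · rw [hrange]; exact Set.finite_range F
  · rw [hrange, ← Nat.card_coe_set_eq, Nat.card_range_of_injective hinj,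
      Nat.card_eq_fintype_card, Fintype.card_fin]
end

section
/- Let H₁, …, Hₙ be a line arrangement in general position on the torus ℝ²/ℤ², i.e. each Hᵢ is the image under the quotient map of an affine line in ℝ² with primitive direction hᵢ ∈ ℤ², no point of the torus lies on three of the lines, any two distinct lines whose directions are parallel (hᵢ = ±hⱼ) are disjoint, and not all of the directions are pairwise parallel. Let v be the number of intersection points (points of the torus lying on at least two of the lines) and let f be the number of connected components of the complement (ℝ²/ℤ²) \ (H₁ ∪ … ∪ Hₙ). Then v = f. -/
/-!
Lift everything to `ℝ²`: the lines become the families of parallel lines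
`cross (h i) (x - p i) ∈ ℤ`, and the faces on the torus are the images of the connected
components of the complement of their union, two components having the same image exactly when
they differ by a lattice translation. Every component lies in a strip between two consecutive
lines of each family, so two non-parallel families make its closure compact.

Compare points by the height `x 0 + √2 * x 1`, which is constant along no line of rational slope.
The lowest point of the closure of a component lies on two lines: at a point on at most one line
one could still descend inside the component. Conversely, near a crossing of exactly two lines each
of the four quadrants lies in a single component, and exactly one of these components, the one
whose two edges at the crossing go uphill, has the crossing as its lowest point. So "lowest point" is a bijection between components
and crossings that commutes with lattice translations, and it descends to a bijection between the
faces and the intersection points on the torus.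
-/

open Set Filter Topology Pointwise

lemma Relator.BiUnique.exists_bijOn {α β : Type*} [Nonempty β] {R : α → β → Prop}
    (hR : Relator.BiUnique R) {s : Set α} {t : Set β} (hst : ∀ a ∈ s, ∃ b ∈ t, R a b)
    (hts : ∀ b ∈ t, ∃ a ∈ s, R a b) : ∃ f : α → β, BijOn f s t := by
  choose! f hf hRf using hst
  refine ⟨f, hf, fun a ha a' ha' he => hR.1 (hRf a ha) (he ▸ hRf a' ha'), fun b hb => ?_⟩
  obtain ⟨a, ha, hab⟩ := hts b hb
  exact ⟨a, ha, hR.2 (hRf a ha) hab⟩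

namespace QuotientAddGroup

variable {G : Type*} [AddCommGroup G] {Γ : AddSubgroup G}

lemma mk_add_of_mem_left {w : G} (hw : w ∈ Γ) (y : G) : ((w + y : G) : G ⧸ Γ) = y := by
  rw [add_comm]; exact mk_add_of_mem y hw

lemma image_vadd_of_mem {w : G} (hw : w ∈ Γ) (s : Set G) :
    ((↑) : G → G ⧸ Γ) '' (w +ᵥ s) = (↑) '' s := by
  rw [← image_vadd, image_image]
  exact image_congr fun y _ => mk_add_of_mem_left hw y

variable [TopologicalSpace G] [IsTopologicalAddGroup G] {V : Set (G ⧸ Γ)}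

lemma vadd_connectedComponentIn_preimage {w : G} (hw : w ∈ Γ) {x : G}
    (hx : (x : G ⧸ Γ) ∈ V) :
    w +ᵥ connectedComponentIn (mk ⁻¹' V) x = connectedComponentIn (mk ⁻¹' V) (w + x) := by
  have hinv : Homeomorph.addLeft w '' (mk ⁻¹' V) = ((↑) ⁻¹' V : Set G) := by
    ext y
    simp only [mem_image, mem_preimage, Homeomorph.coe_addLeft]
    constructor
    · rintro ⟨z, hz, rfl⟩
      rwa [mk_add_of_mem_left hw]
    · intro hy
      exact ⟨-w + y, by rwa [mk_add_of_mem_left (neg_mem hw)], by abel⟩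
  have := (Homeomorph.addLeft w).image_connectedComponentIn (s := mk ⁻¹' V) hx
  rw [hinv] at this
  rw [← image_vadd]
  exact this

lemma exists_connectedComponentIn_eq_vadd {x y : G}
    (hy : (y : G ⧸ Γ) ∈ (↑) '' connectedComponentIn (mk ⁻¹' V) x) :
    ∃ w ∈ Γ, connectedComponentIn (mk ⁻¹' V) y =
      w +ᵥ connectedComponentIn (mk ⁻¹' V) x := by
  obtain ⟨c, hc, hcy⟩ := hy
  have hw : y - c ∈ Γ := by
    rw [QuotientAddGroup.eq] at hcy
    rwa [neg_add_eq_sub] at hcy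
  refine ⟨y - c, hw, ?_⟩
  rw [connectedComponentIn_eq hc, vadd_connectedComponentIn_preimage (V := V) hw
    (connectedComponentIn_subset (mk ⁻¹' V) x hc), sub_add_cancel]

lemma image_connectedComponentIn_preimage [LocallyConnectedSpace G] (hV : IsOpen V) {x : G}
    (hx : (x : G ⧸ Γ) ∈ V) :
    ((↑) : G → G ⧸ Γ) '' connectedComponentIn (mk ⁻¹' V) x =
      connectedComponentIn V x := by
  set U : Set G := mk ⁻¹' V
  have hU : IsOpen U := hV.preimage (continuous_mk (N := Γ))
  refine subset_antisymm ?_ ?_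
  · have := (continuous_mk (N := Γ)).continuousOn.image_connectedComponentIn_subset (s := U) hx
    rwa [image_preimage_eq V mk_surjective] at this
  set A : Set (G ⧸ Γ) := (↑) '' connectedComponentIn U x
  -- points of `U` over `A` fill whole components of `U`, so the rest of `U` is open too
  have hrest : IsOpen (U \ (↑) ⁻¹' A) := by
    refine isOpen_iff_forall_mem_open.2 fun y hy => ⟨connectedComponentIn U y, ?_,
      hU.connectedComponentIn, mem_connectedComponentIn hy.1⟩
    intro y' hy'
    refine ⟨connectedComponentIn_subset _ _ hy', fun hA => hy.2 ?_⟩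
    obtain ⟨w, hw, hC⟩ := exists_connectedComponentIn_eq_vadd hA
    have : y ∈ w +ᵥ connectedComponentIn U x := by
      rw [← hC, ← connectedComponentIn_eq hy']
      exact mem_connectedComponentIn hy.1
    show mk y ∈ mk '' _
    rw [← image_vadd_of_mem hw]
    exact mem_image_of_mem _ this
  refine isPreconnected_connectedComponentIn.subset_left_of_subset_union
    (isOpenMap_coe _ hU.connectedComponentIn) (isOpenMap_coe _ hrest) ?_ ?_
    ⟨mk x, mem_connectedComponentIn hx, x, mem_connectedComponentIn hx, rfl⟩
  · rw [disjoint_left]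
    rintro _ hA ⟨y, hy, rfl⟩
    exact hy.2 hA
  · intro v hv
    obtain ⟨y, rfl⟩ := mk_surjective v
    by_cases hA : (y : G ⧸ Γ) ∈ A
    · exact Or.inl hA
    · exact Or.inr ⟨y, ⟨connectedComponentIn_subset V _ hv, hA⟩, rfl⟩

end QuotientAddGroup

namespace TorusArrangement

local notation "ℝ²" => Fin 2 → ℝ

def intVec (a : Fin 2 → ℤ) : ℝ² := fun k => a k

def cross (a : Fin 2 → ℤ) : ℝ² →ₗ[ℝ] ℝ where
  toFun x := a 1 * x 0 - a 0 * x 1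
  map_add' x y := by simp only [Pi.add_apply]; ring
  map_smul' t x := by simp only [Pi.smul_apply, smul_eq_mul, RingHom.id_apply]; ring

noncomputable def height : ℝ² →ₗ[ℝ] ℝ where
  toFun x := x 0 + √2 * x 1
  map_add' x y := by simp only [Pi.add_apply]; ring
  map_smul' t x := by simp only [Pi.smul_apply, smul_eq_mul, RingHom.id_apply]; ring

lemma cross_apply (a : Fin 2 → ℤ) (x : ℝ²) : cross a x = a 1 * x 0 - a 0 * x 1 := rfl

lemma height_apply (x : ℝ²) : height x = x 0 + √2 * x 1 := rfl

lemma continuous_cross (a : Fin 2 → ℤ) : Continuous (cross a) :=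
  (cross a).continuous_of_finiteDimensional

lemma cross_sub_sub (a : Fin 2 → ℤ) (x y q : ℝ²) :
    cross a (x - y) = cross a (x - q) - cross a (y - q) := by
  rw [← map_sub, sub_sub_sub_cancel_right]

@[simp] lemma cross_intVec_self (a : Fin 2 → ℤ) : cross a (intVec a) = 0 := by
  simp only [cross_apply, intVec]; ring

lemma cross_intVec_comm (a b : Fin 2 → ℤ) : cross b (intVec a) = -cross a (intVec b) := by
  simp only [cross_apply, intVec]; ring

lemma ne_zero_of_cross_intVec_ne_zero {a b : Fin 2 → ℤ} (hab : cross a (intVec b) ≠ 0) :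
    b ≠ 0 := by
  rintro rfl
  simp [cross_apply, intVec] at hab

lemma exists_eq_smul_of_cross_eq_zero {a : Fin 2 → ℤ} (ha : a ≠ 0) {x : ℝ²}
    (hx : cross a x = 0) : ∃ t : ℝ, x = t • intVec a := by
  rw [cross_apply] at hx
  have ha' : a 0 ≠ 0 ∨ a 1 ≠ 0 := by
    by_contra! h0
    exact ha (funext fun k => by fin_cases k <;> simp [h0])
  rcases ha' with h0 | h1
  · have h0 : (a 0 : ℝ) ≠ 0 := by exact_mod_cast h0
    refine ⟨x 0 / a 0, funext fun k => ?_⟩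
    fin_cases k
    · simp [intVec, h0]
    · simp [intVec]; field_simp; linarith
  · have h1 : (a 1 : ℝ) ≠ 0 := by exact_mod_cast h1
    refine ⟨x 1 / a 1, funext fun k => ?_⟩
    fin_cases k
    · simp [intVec]; field_simp; linarith
    · simp [intVec, h1]

lemma eq_zero_of_cross_eq_zero {a b : Fin 2 → ℤ} (hab : cross a (intVec b) ≠ 0) {x : ℝ²}
    (ha : cross a x = 0) (hb : cross b x = 0) : x = 0 := by
  obtain ⟨t, rfl⟩ := exists_eq_smul_of_cross_eq_zero (ne_zero_of_cross_intVec_ne_zero hab) hb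
  rw [map_smul, smul_eq_mul, mul_eq_zero] at ha
  rw [ha.resolve_right hab, zero_smul]

lemma eq_smul_add_smul {a b : Fin 2 → ℤ} (hab : cross a (intVec b) ≠ 0) (x : ℝ²) :
    x = (cross a x / cross a (intVec b)) • intVec b
      + (cross b x / cross b (intVec a)) • intVec a := by
  have hba : cross b (intVec a) ≠ 0 := by rw [cross_intVec_comm]; exact neg_ne_zero.2 hab
  rw [← sub_eq_zero]
  refine eq_zero_of_cross_eq_zero hab ?_ ?_ <;>
    simp [map_sub, map_add, map_smul, hab, hba]

lemma ne_zero_of_gcd_eq_one {a : Fin 2 → ℤ} (ha : Int.gcd (a 0) (a 1) = 1) : a ≠ 0 := by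
  rintro rfl
  simp at ha

lemma cross_intVec_ne_zero {a b : Fin 2 → ℤ} (ha : Int.gcd (a 0) (a 1) = 1)
    (hb : Int.gcd (b 0) (b 1) = 1) (hne : a ≠ b) (hne' : a ≠ -b) :
    cross a (intVec b) ≠ 0 := by
  intro h0
  have hd : a 0 * b 1 = a 1 * b 0 := by
    have : ((a 1 * b 0 - a 0 * b 1 : ℤ) : ℝ) = 0 := by
      simpa [cross_apply, intVec] using h0
    linarith [Int.cast_eq_zero.1 this]
  obtain ⟨u, v, huv⟩ := Int.isCoprime_iff_gcd_eq_one.2 ha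
  set t := u * b 0 + v * b 1
  have hb₀ : b 0 = t * a 0 := by linear_combination -(b 0) * huv - v * hd
  have hb₁ : b 1 = t * a 1 := by linear_combination -(b 1) * huv + u * hd
  rw [hb₀, hb₁, Int.gcd_mul_left, ha, mul_one] at hb
  rcases Int.natAbs_eq_iff.1 hb with ht | ht <;> simp only [Nat.cast_one] at ht
  · exact hne (funext fun k => by fin_cases k <;> simp [hb₀, hb₁, ht])
  · exact hne' (funext fun k => by fin_cases k <;> simp [hb₀, hb₁, ht])

lemma height_intVec_ne_zero {a : Fin 2 → ℤ} (ha : a ≠ 0) : height (intVec a) ≠ 0 := by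
  intro h0
  rw [height_apply, intVec, intVec] at h0
  by_cases h1 : a 1 = 0
  · apply ha
    funext k
    fin_cases k
    · simpa [h1] using h0
    · exact h1
  · apply irrational_sqrt_two
    refine ⟨-(a 0) / a 1, ?_⟩
    have : (a 1 : ℝ) ≠ 0 := by exact_mod_cast h1
    push_cast
    field_simp
    linarith

lemma convex_setOf_pos_mul_cross_sub (c : ℝ) (a : Fin 2 → ℤ) (z : ℝ²) :
    Convex ℝ {x | 0 < c * cross a (x - z)} := by
  have hlin : IsLinearMap ℝ fun x => c * cross a x :=
    ⟨fun x y => by rw [map_add, mul_add],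
      fun t x => by rw [map_smul, smul_eq_mul, smul_eq_mul]; ring⟩
  have hset : {x | 0 < c * cross a (x - z)} = {x | c * cross a z < c * cross a x} := by
    ext x
    show (0 : ℝ) < c * cross a (x - z) ↔ c * cross a z < c * cross a x
    rw [map_sub, mul_sub, sub_pos]
  rw [hset]
  exact convex_halfSpace_gt hlin _

lemma mul_pos_of_mul_pos_of_mul_pos {c c' u : ℝ} (h : 0 < c * u) (h' : 0 < c' * u) :
    0 < c * c' := by
  have := mul_pos h h'
  rw [show c * u * (c' * u) = c * c' * u ^ 2 by ring] at this
  exact pos_of_mul_pos_left this (sq_nonneg u)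

lemma intVec_mem_intLattice (a : Fin 2 → ℤ) : intVec a ∈ intLattice := fun k => ⟨a k, rfl⟩

lemma exists_intCast_eq_cross {a : Fin 2 → ℤ} {w : ℝ²} (hw : w ∈ intLattice) :
    ∃ m : ℤ, cross a w = m := by
  obtain ⟨m₀, hm₀⟩ := hw 0
  obtain ⟨m₁, hm₁⟩ := hw 1
  exact ⟨a 1 * m₀ - a 0 * m₁, by simp [cross_apply, hm₀, hm₁]⟩

lemma torusMk_surjective : Function.Surjective torusMk := QuotientAddGroup.mk_surjective

lemma torusMk_eq_torusMk {x y : ℝ²} : torusMk x = torusMk y ↔ y - x ∈ intLattice := by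
  rw [torusMk, QuotientAddGroup.eq, neg_add_eq_sub]

lemma torusMk_add_of_mem {w : ℝ²} (hw : w ∈ intLattice) (x : ℝ²) :
    torusMk (w + x) = torusMk x :=
  QuotientAddGroup.mk_add_of_mem_left hw x

lemma exists_mem_Icc_torusMk_eq (v : Torus2) : ∃ y ∈ Icc (0 : ℝ²) 1, torusMk y = v := by
  obtain ⟨x, rfl⟩ := torusMk_surjective v
  exact ⟨fun k => Int.fract (x k),
    ⟨fun k => Int.fract_nonneg _, fun k => (Int.fract_lt_one _).le⟩,
    torusMk_eq_torusMk.2 fun k => ⟨⌊x k⌋, Int.self_sub_fract _⟩⟩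

def lineLift (a : Fin 2 → ℤ) (q : ℝ²) : Set ℝ² := {x | ∃ m : ℤ, cross a (x - q) = m}

lemma isClosed_lineLift (a : Fin 2 → ℤ) (q : ℝ²) : IsClosed (lineLift a q) := by
  have : lineLift a q = (fun x => cross a (x - q)) ⁻¹' range ((↑) : ℤ → ℝ) := by
    ext x; simp [lineLift, eq_comm]
  rw [this]
  exact Int.isClosedEmbedding_coe_real.isClosed_range.preimage
    ((continuous_cross a).comp (continuous_sub_right q))

lemma preimage_torusGeodesic {a : Fin 2 → ℤ} (ha : Int.gcd (a 0) (a 1) = 1) (q : ℝ²) :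
    torusMk ⁻¹' torusGeodesic q a = lineLift a q := by
  ext x
  constructor
  · rintro ⟨_, ⟨t, rfl⟩, hyx⟩
    obtain ⟨m, hm⟩ := exists_intCast_eq_cross (a := a) (torusMk_eq_torusMk.1 hyx)
    change cross a (x - (q + t • intVec a)) = m at hm
    refine ⟨m, ?_⟩
    rw [show x - q = x - (q + t • intVec a) + t • intVec a by abel, map_add, hm, map_smul,
      cross_intVec_self, smul_zero, add_zero]
  · rintro ⟨m, hm⟩
    obtain ⟨u, v, huv⟩ := Int.isCoprime_iff_gcd_eq_one.2 ha
    have hw : cross a (intVec ![m * v, -(m * u)]) = m := by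
      simp only [cross_apply, intVec, Matrix.cons_val_zero, Matrix.cons_val_one,
        Matrix.cons_val_fin_one, Int.cast_mul, Int.cast_neg]
      linear_combination (m : ℝ) * (by exact_mod_cast huv : (u : ℝ) * a 0 + v * a 1 = 1)
    obtain ⟨t, ht⟩ := exists_eq_smul_of_cross_eq_zero (ne_zero_of_gcd_eq_one ha)
      (x := x - q - intVec ![m * v, -(m * u)]) (by rw [map_sub, hm, hw, sub_self])
    refine ⟨q + t • intVec a, ⟨t, rfl⟩, torusMk_eq_torusMk.2 ?_⟩
    rw [show x - (q + t • intVec a) = intVec ![m * v, -(m * u)] by rw [← ht]; abel]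
    exact intVec_mem_intLattice _

lemma mul_sub_intCast_pos_of_isPreconnected {a : Fin 2 → ℤ} {q : ℝ²} {S : Set ℝ²}
    (hS : IsPreconnected S) (hSU : Disjoint S (lineLift a q)) {x y : ℝ²} (hx : x ∈ S)
    (hy : y ∈ S) (m : ℤ) : 0 < (cross a (x - q) - m) * (cross a (y - q) - m) := by
  set f : ℝ² → ℝ := fun x => cross a (x - q)
  have hf : (f '' S).OrdConnected := isPreconnected_iff_ordConnected.1 <|
    hS.image f ((continuous_cross a).comp (continuous_sub_right q)).continuousOn
  by_contra! hle
  have hm : (m : ℝ) ∈ uIcc (f x) (f y) := by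
    rcases mul_nonpos_iff.1 hle with h | h
    · exact mem_uIcc.2 (Or.inr ⟨by linarith, by linarith⟩)
    · exact mem_uIcc.2 (Or.inl ⟨by linarith, by linarith⟩)
  obtain ⟨w, hw, hwm⟩ := hf.uIcc_subset (mem_image_of_mem f hx) (mem_image_of_mem f hy) hm
  exact disjoint_left.1 hSU hw ⟨m, hwm⟩

lemma abs_cross_sub_lt_one_of_isPreconnected {a : Fin 2 → ℤ} {q : ℝ²} {S : Set ℝ²}
    (hS : IsPreconnected S) (hSU : Disjoint S (lineLift a q)) {x y : ℝ²} (hx : x ∈ S)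
    (hy : y ∈ S) : |cross a (x - y)| < 1 := by
  set m := ⌊cross a (x - q)⌋
  have h₁ := mul_sub_intCast_pos_of_isPreconnected hS hSU hx hy m
  have h₂ := mul_sub_intCast_pos_of_isPreconnected hS hSU hx hy (m + 1)
  have hm := Int.floor_le (cross a (x - q))
  have hm' := Int.lt_floor_add_one (cross a (x - q))
  push_cast at h₂
  rw [cross_sub_sub a x y q, abs_sub_lt_iff]
  constructor <;> nlinarith

lemma finite_lineLift_inter_lineLift_inter {a b : Fin 2 → ℤ} (hab : cross a (intVec b) ≠ 0)
    (q r : ℝ²) {K : Set ℝ²} (hK : IsCompact K) :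
    (lineLift a q ∩ lineLift b r ∩ K).Finite := by
  set f : ℝ² → ℝ × ℝ := fun x => (cross a (x - q), cross b (x - r))
  have hf : Continuous f := by
    refine .prodMk ?_ ?_ <;> exact (continuous_cross _).comp (continuous_sub_right _)
  obtain ⟨B, hB⟩ := hK.exists_bound_of_continuousOn hf.continuousOn
  set M : Set ℝ := (↑) '' Icc ⌈-B⌉ ⌊B⌋
  have hM : M.Finite := (finite_Icc _ _).image _
  refine Finite.of_finite_image (f := f) ((hM.prod hM).subset ?_) fun x _ y _ hxy => ?_
  · rintro _ ⟨x, ⟨⟨⟨m, hm⟩, ⟨m', hm'⟩⟩, hxK⟩, rfl⟩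
    have h₁ := (norm_fst_le (f x)).trans (hB x hxK)
    have h₂ := (norm_snd_le (f x)).trans (hB x hxK)
    simp only [f, hm, hm', Real.norm_eq_abs, abs_le] at h₁ h₂
    exact ⟨⟨m, ⟨Int.ceil_le.2 h₁.1, Int.le_floor.2 h₁.2⟩, hm.symm⟩,
      ⟨m', ⟨Int.ceil_le.2 h₂.1, Int.le_floor.2 h₂.2⟩, hm'.symm⟩⟩
  · simp only [f, Prod.mk.injEq] at hxy
    refine sub_eq_zero.1 (eq_zero_of_cross_eq_zero hab ?_ ?_)
    · rw [cross_sub_sub a x y q, hxy.1, sub_self]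
    · rw [cross_sub_sub b x y r, hxy.2, sub_self]

def IsLowestPoint (s : Set ℝ²) (z : ℝ²) : Prop :=
  z ∈ closure s ∧ IsMinOn height (closure s) z

lemma IsLowestPoint.vadd {s : Set ℝ²} {z : ℝ²} (hz : IsLowestPoint s z) (w : ℝ²) :
    IsLowestPoint (w +ᵥ s) (w + z) := by
  rw [IsLowestPoint, closure_vadd]
  refine ⟨vadd_mem_vadd_set hz.1, isMinOn_iff.2 ?_⟩
  rintro _ ⟨x, hx, rfl⟩
  simpa [map_add] using isMinOn_iff.1 hz.2 x hx

section Arrangement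

variable {ι : Type*} (h : ι → Fin 2 → ℤ) (p : ι → ℝ²)

def complLift : Set ℝ² := (⋃ i, lineLift (h i) (p i))ᶜ

def vertexLift : Set ℝ² :=
  {z | ∃ i j, i ≠ j ∧ z ∈ lineLift (h i) (p i) ∧ z ∈ lineLift (h j) (p j)}

def GeneralPosition : Prop :=
  ∀ z i j, i ≠ j → z ∈ lineLift (h i) (p i) → z ∈ lineLift (h j) (p j) →
    cross (h i) (intVec (h j)) ≠ 0 ∧ ∀ k, z ∈ lineLift (h k) (p k) → k = i ∨ k = j

def IsLowestVertex (v : Torus2) (D : Set Torus2) : Prop :=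
  ∃ x₀ ∈ complLift h p, ∃ z, IsLowestPoint (connectedComponentIn (complLift h p) x₀) z ∧
    torusMk z = v ∧ torusMk '' connectedComponentIn (complLift h p) x₀ = D

lemma isOpen_complLift [Finite ι] : IsOpen (complLift h p) :=
  (isClosed_iUnion_of_finite fun i => isClosed_lineLift (h i) (p i)).isOpen_compl

lemma eventually_mem_lineLift_imp [Finite ι] (z : ℝ²) :
    ∀ᶠ x in 𝓝 z, ∀ k, x ∈ lineLift (h k) (p k) →
      z ∈ lineLift (h k) (p k) ∧ cross (h k) (x - z) = 0 := by
  refine eventually_all.2 fun k => ?_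
  set f : ℝ² → ℝ := fun x => cross (h k) (x - p k)
  have hf : Continuous f := (continuous_cross _).comp (continuous_sub_right _)
  set S : Set ℝ := (↑) '' {m : ℤ | (m : ℝ) ≠ f z}
  have hS : IsClosed S := Int.isClosedEmbedding_coe_real.isClosedMap _ (isClosed_discrete _)
  have hzS : f z ∉ S := by rintro ⟨m, hm, hmz⟩; exact hm hmz
  filter_upwards [hf.continuousAt.preimage_mem_nhds (hS.isOpen_compl.mem_nhds hzS)]
    with x hxS ⟨m, hm⟩
  have hmz : (m : ℝ) = f z := by
    by_contra hne
    exact hxS ⟨m, hne, hm.symm⟩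
  refine ⟨⟨m, hmz.symm⟩, ?_⟩
  rw [cross_sub_sub _ x z (p k)]
  exact sub_eq_zero.2 (hm.trans hmz)

variable {h p}

lemma disjoint_lineLift_of_subset_complLift {S : Set ℝ²} (hS : S ⊆ complLift h p) (k : ι) :
    Disjoint S (lineLift (h k) (p k)) :=
  disjoint_left.2 fun _ hx hk => hS hx (mem_iUnion.2 ⟨k, hk⟩)

lemma ne_zero_of_mem_complLift {x : ℝ²} (hx : x ∈ complLift h p) (k : ι) : h k ≠ 0 := by
  intro h0
  refine hx (mem_iUnion.2 ⟨k, 0, ?_⟩)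
  simp [h0, cross_apply]

lemma cross_sub_ne_zero {x z : ℝ²} (hx : x ∈ complLift h p) {k : ι}
    (hz : z ∈ lineLift (h k) (p k)) : cross (h k) (x - z) ≠ 0 := by
  obtain ⟨m, hm⟩ := hz
  intro h0
  refine hx (mem_iUnion.2 ⟨k, m, ?_⟩)
  rwa [cross_sub_sub _ x z (p k), hm, sub_eq_zero] at h0

lemma mul_cross_sub_pos {x₀ x z : ℝ²} (hx₀ : x₀ ∈ complLift h p)
    (hx : x ∈ connectedComponentIn (complLift h p) x₀) {k : ι}
    (hz : z ∈ lineLift (h k) (p k)) : 0 < cross (h k) (x₀ - z) * cross (h k) (x - z) := by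
  obtain ⟨m, hm⟩ := hz
  rw [cross_sub_sub _ x₀ z (p k), cross_sub_sub _ x z (p k), hm]
  exact mul_sub_intCast_pos_of_isPreconnected isPreconnected_connectedComponentIn
    (disjoint_lineLift_of_subset_complLift (connectedComponentIn_subset _ _) k)
    (mem_connectedComponentIn hx₀) hx m

lemma isCompact_closure_connectedComponentIn {i j : ι}
    (hij : cross (h i) (intVec (h j)) ≠ 0) {x₀ : ℝ²} (hx₀ : x₀ ∈ complLift h p) :
    IsCompact (closure (connectedComponentIn (complLift h p) x₀)) := by
  set C := connectedComponentIn (complLift h p) x₀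
  set E : ℝ² →ₗ[ℝ] ℝ × ℝ := (cross (h i)).prod (cross (h j))
  have hE : Topology.IsClosedEmbedding E := by
    refine E.isClosedEmbedding_of_injective (LinearMap.ker_eq_bot'.2 fun x hx => ?_)
    simp only [E, LinearMap.prod_apply, Function.prod, Prod.mk_eq_zero] at hx
    exact eq_zero_of_cross_eq_zero hij hx.1 hx.2
  have hstrip : ∀ k, ∀ x ∈ C, |cross (h k) (x - x₀)| < 1 := fun k x hx =>
    abs_cross_sub_lt_one_of_isPreconnected isPreconnected_connectedComponentIn
      (disjoint_lineLift_of_subset_complLift (connectedComponentIn_subset _ _) k) hx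
      (mem_connectedComponentIn hx₀)
  refine (hE.isCompact_preimage (isCompact_closedBall (E x₀) 1)).of_isClosed_subset
    isClosed_closure (closure_minimal (fun x hx => ?_)
      (Metric.isClosed_closedBall.preimage hE.continuous))
  change max |cross (h i) x - cross (h i) x₀| |cross (h j) x - cross (h j) x₀| ≤ 1
  rw [← map_sub, ← map_sub]
  exact max_le (hstrip i x hx).le (hstrip j x hx).le

lemma exists_isLowestPoint {i j : ι} (hij : cross (h i) (intVec (h j)) ≠ 0) {x₀ : ℝ²}
    (hx₀ : x₀ ∈ complLift h p) :
    ∃ z, IsLowestPoint (connectedComponentIn (complLift h p) x₀) z :=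
  (isCompact_closure_connectedComponentIn hij hx₀).exists_isMinOn
    ⟨x₀, subset_closure (mem_connectedComponentIn hx₀)⟩
    height.continuous_of_finiteDimensional.continuousOn

/-- The two positivity hypotheses say that both edges of the component of `x₀` at `z` go up:
`(cross (h i) (x₀ - z) * cross (h i) (intVec (h j))) • intVec (h j)` runs along line `j` to the
side of line `i` where the component lies, and symmetrically. -/
lemma lt_height_of_edge_pos {x₀ z : ℝ²} (hx₀ : x₀ ∈ complLift h p) {i j : ι}
    (hi : z ∈ lineLift (h i) (p i)) (hj : z ∈ lineLift (h j) (p j))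
    (hij : cross (h i) (intVec (h j)) ≠ 0)
    (hpos_i : 0 < cross (h i) (x₀ - z) * cross (h i) (intVec (h j)) * height (intVec (h j)))
    (hpos_j : 0 < cross (h j) (x₀ - z) * cross (h j) (intVec (h i)) * height (intVec (h i)))
    {x : ℝ²} (hx : x ∈ closure (connectedComponentIn (complLift h p) x₀)) (hxz : x ≠ z) :
    height z < height x := by
  have hside : ∀ k, z ∈ lineLift (h k) (p k) →
      0 ≤ cross (h k) (x₀ - z) * cross (h k) (x - z) := fun k hk =>
    closure_minimal (fun y hy => (mul_cross_sub_pos hx₀ hy hk).le)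
      (isClosed_le continuous_const (continuous_const.mul
        ((continuous_cross _).comp (continuous_sub_right z)))) hx
  -- each edge term `a / κ * H` has the sign of `(c * a) * (c * κ * H)`
  have hterm : ∀ {c a κ H : ℝ}, c ≠ 0 → κ ≠ 0 → 0 ≤ c * a → 0 < c * κ * H →
      0 ≤ a / κ * H ∧ (a ≠ 0 → 0 < a / κ * H) := by
    intro c a κ H hc hκ ha hcκ
    have heq : a / κ * H = c * a * (c * κ * H) / (c * κ) ^ 2 := by field_simp
    rw [heq]
    refine ⟨by positivity, fun ha0 => div_pos (mul_pos (ha.lt_of_ne ?_) hcκ) (by positivity)⟩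
    exact (mul_ne_zero hc ha0).symm
  have hji : cross (h j) (intVec (h i)) ≠ 0 := by rw [cross_intVec_comm]; exact neg_ne_zero.2 hij
  obtain ⟨hi₀, hi₁⟩ := hterm (cross_sub_ne_zero hx₀ hi) hij (hside i hi) hpos_i
  obtain ⟨hj₀, hj₁⟩ := hterm (cross_sub_ne_zero hx₀ hj) hji (hside j hj) hpos_j
  have hdecomp := congrArg height (eq_smul_add_smul hij (x - z))
  rw [map_add, map_smul, map_smul, smul_eq_mul, smul_eq_mul, map_sub] at hdecomp
  rw [← sub_pos, hdecomp]
  by_cases ha : cross (h i) (x - z) = 0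
  · have hb : cross (h j) (x - z) ≠ 0 := fun hb =>
      hxz (sub_eq_zero.1 (eq_zero_of_cross_eq_zero hij ha hb))
    exact add_pos_of_nonneg_of_pos hi₀ (hj₁ hb)
  · exact add_pos_of_pos_of_nonneg (hi₁ ha) hj₀

lemma image_vertexLift {L : ι → Set Torus2}
    (hL : ∀ i, torusMk ⁻¹' L i = lineLift (h i) (p i)) :
    torusMk '' vertexLift h p = {x | ∃ i j, i ≠ j ∧ x ∈ L i ∧ x ∈ L j} := by
  simp only [vertexLift, ← hL]
  ext v
  constructor
  · rintro ⟨z, ⟨i, j, hij, hi, hj⟩, rfl⟩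
    exact ⟨i, j, hij, hi, hj⟩
  · rintro ⟨i, j, hij, hi, hj⟩
    obtain ⟨z, rfl⟩ := torusMk_surjective v
    exact ⟨z, ⟨i, j, hij, hi, hj⟩, rfl⟩

variable [Finite ι]

lemma eventually_mem_connectedComponentIn {x₀ z : ℝ²} (hx₀ : x₀ ∈ complLift h p)
    (hz : z ∈ closure (connectedComponentIn (complLift h p) x₀)) :
    ∀ᶠ x in 𝓝 z, (∀ k, z ∈ lineLift (h k) (p k) →
      0 < cross (h k) (x₀ - z) * cross (h k) (x - z)) →
        x ∈ connectedComponentIn (complLift h p) x₀ := by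
  obtain ⟨ε, hε, hball⟩ :=
    Metric.eventually_nhds_iff_ball.1 (eventually_mem_lineLift_imp h p z)
  filter_upwards [Metric.ball_mem_nhds z hε] with x hx hside
  set S := Metric.ball z ε ∩ ⋂ k, ⋂ (_ : z ∈ lineLift (h k) (p k)),
    {y | 0 < cross (h k) (x₀ - z) * cross (h k) (y - z)}
  have hconv : Convex ℝ S := (convex_ball z ε).inter <|
    convex_iInter fun k => convex_iInter fun _ => convex_setOf_pos_mul_cross_sub _ _ _
  have hSU : S ⊆ complLift h p := by
    rintro y ⟨hy, hyside⟩ hyl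
    obtain ⟨k, hk⟩ := mem_iUnion.1 hyl
    obtain ⟨hzk, h0⟩ := hball y hy k hk
    have := mem_iInter₂.1 hyside k hzk
    change (0 : ℝ) < _ * _ at this
    rw [h0, mul_zero] at this
    exact this.false
  obtain ⟨w, hwC, hwz⟩ := Metric.mem_closure_iff.1 hz ε hε
  have hwS : w ∈ S := ⟨by rwa [Metric.mem_ball, dist_comm],
    mem_iInter₂.2 fun k hk => mul_cross_sub_pos hx₀ hwC hk⟩
  rw [connectedComponentIn_eq hwC]
  exact hconv.isPreconnected.subset_connectedComponentIn hwS hSU ⟨hx, mem_iInter₂.2 hside⟩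

lemma IsLowestPoint.height_nonneg {x₀ z d : ℝ²} (hx₀ : x₀ ∈ complLift h p)
    (hz : IsLowestPoint (connectedComponentIn (complLift h p) x₀) z)
    (hd : ∀ k, z ∈ lineLift (h k) (p k) → 0 ≤ cross (h k) (x₀ - z) * cross (h k) d) :
    0 ≤ height d := by
  -- leave `z` in the direction `d`, bending towards `x₀` just enough to enter the face
  set γ : ℝ → ℝ² := fun t => z + t • d + t ^ 2 • (x₀ - z)
  have hγ : Tendsto γ (𝓝[>] 0) (𝓝 z) := by
    have : Continuous γ := by fun_prop
    simpa [γ] using (this.tendsto 0).mono_left nhdsWithin_le_nhds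
  have hmem : ∀ᶠ t in 𝓝[>] 0, γ t ∈ connectedComponentIn (complLift h p) x₀ := by
    filter_upwards [hγ.eventually (eventually_mem_connectedComponentIn hx₀ hz.1),
      self_mem_nhdsWithin] with t ht (htpos : 0 < t)
    refine ht fun k hk => ?_
    have hc := cross_sub_ne_zero hx₀ hk
    have hγk : cross (h k) (γ t - z) = t * cross (h k) d + t ^ 2 * cross (h k) (x₀ - z) := by
      simp only [γ, add_assoc, add_sub_cancel_left, map_add, map_smul, smul_eq_mul]
    rw [hγk]
    nlinarith [hd k hk, pow_pos htpos 2, mul_self_pos.2 hc]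
  have hle : ∀ᶠ t in 𝓝[>] 0, 0 ≤ height d + t * height (x₀ - z) := by
    filter_upwards [hmem, self_mem_nhdsWithin] with t ht (htpos : 0 < t)
    have hmin := isMinOn_iff.1 hz.2 _ (subset_closure ht)
    have hγh : height (γ t) = height z + t * (height d + t * height (x₀ - z)) := by
      simp only [γ, map_add, map_smul, smul_eq_mul]; ring
    rw [hγh, le_add_iff_nonneg_right] at hmin
    exact nonneg_of_mul_nonneg_right hmin htpos
  have hlim :
      Tendsto (fun t => height d + t * height (x₀ - z)) (𝓝[>] 0) (𝓝 (height d)) := by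
    have : Continuous fun t : ℝ => height d + t * height (x₀ - z) := by fun_prop
    simpa using (this.tendsto 0).mono_left nhdsWithin_le_nhds
  exact ge_of_tendsto hlim hle

lemma IsLowestPoint.mem_vertexLift {x₀ z : ℝ²} (hx₀ : x₀ ∈ complLift h p)
    (hz : IsLowestPoint (connectedComponentIn (complLift h p) x₀) z) : z ∈ vertexLift h p := by
  by_contra hv
  obtain ⟨d, hd, hdk⟩ :
      ∃ d, height d < 0 ∧ ∀ k, z ∈ lineLift (h k) (p k) → cross (h k) d = 0 := by
    by_cases hex : ∃ i, z ∈ lineLift (h i) (p i)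
    · obtain ⟨i, hi⟩ := hex
      have hH := height_intVec_ne_zero (ne_zero_of_mem_complLift hx₀ i)
      refine ⟨-height (intVec (h i)) • intVec (h i), ?_, fun k hk => ?_⟩
      · simpa [map_smul] using mul_self_pos.2 hH
      · obtain rfl : k = i := by_contra fun hki => hv ⟨k, i, hki, hk, hi⟩
        simp [map_smul]
    · exact ⟨![-1, 0], by simp [height_apply], fun k hk => (hex ⟨k, hk⟩).elim⟩
  exact hd.not_ge (hz.height_nonneg hx₀ fun k hk => by rw [hdk k hk, mul_zero])

lemma IsLowestPoint.edge_pos {x₀ z : ℝ²} (hx₀ : x₀ ∈ complLift h p)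
    (hz : IsLowestPoint (connectedComponentIn (complLift h p) x₀) z) {i j : ι}
    (hi : z ∈ lineLift (h i) (p i)) (hij : cross (h i) (intVec (h j)) ≠ 0)
    (honly : ∀ k, z ∈ lineLift (h k) (p k) → k = i ∨ k = j) :
    0 < cross (h i) (x₀ - z) * cross (h i) (intVec (h j)) * height (intVec (h j)) := by
  set c := cross (h i) (x₀ - z) * cross (h i) (intVec (h j))
  have hc : c ≠ 0 := mul_ne_zero (cross_sub_ne_zero hx₀ hi) hij
  have hH := height_intVec_ne_zero (ne_zero_of_cross_intVec_ne_zero hij)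
  have hd := hz.height_nonneg hx₀ (d := c • intVec (h j)) fun k hk => by
    rcases honly k hk with rfl | rfl
    · rw [map_smul, smul_eq_mul, ← mul_assoc, mul_comm _ c, mul_assoc]
      exact mul_self_nonneg c
    · simp [map_smul]
  rw [map_smul, smul_eq_mul] at hd
  exact hd.lt_of_ne (mul_ne_zero hc hH).symm

lemma IsLowestPoint.eq (hgp : GeneralPosition h p) {x₀ z z' : ℝ²}
    (hx₀ : x₀ ∈ complLift h p)
    (hz : IsLowestPoint (connectedComponentIn (complLift h p) x₀) z)
    (hz' : IsLowestPoint (connectedComponentIn (complLift h p) x₀) z') : z' = z := by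
  obtain ⟨i, j, hij, hi, hj⟩ := hz.mem_vertexLift hx₀
  obtain ⟨hκ, honly⟩ := hgp z i j hij hi hj
  obtain ⟨hκ', honly'⟩ := hgp z j i hij.symm hj hi
  by_contra hne
  exact (lt_height_of_edge_pos hx₀ hi hj hκ (hz.edge_pos hx₀ hi hκ honly)
    (hz.edge_pos hx₀ hj hκ' honly') hz'.1 hne).not_ge (isMinOn_iff.1 hz'.2 z hz.1)

lemma connectedComponentIn_eq_of_isLowestPoint (hgp : GeneralPosition h p) {x₀ x₁ z : ℝ²}
    (hx₀ : x₀ ∈ complLift h p) (hx₁ : x₁ ∈ complLift h p)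
    (hz₀ : IsLowestPoint (connectedComponentIn (complLift h p) x₀) z)
    (hz₁ : IsLowestPoint (connectedComponentIn (complLift h p) x₁) z) :
    connectedComponentIn (complLift h p) x₀ = connectedComponentIn (complLift h p) x₁ := by
  obtain ⟨i, j, hij, hi, hj⟩ := hz₀.mem_vertexLift hx₀
  obtain ⟨hκ, honly⟩ := hgp z i j hij hi hj
  obtain ⟨hκ', honly'⟩ := hgp z j i hij.symm hj hi
  -- by the edge conditions, both components lie on the same side of each line through `z`
  have hside : ∀ k, z ∈ lineLift (h k) (p k) →
      0 < cross (h k) (x₁ - z) * cross (h k) (x₀ - z) := by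
    intro k hk
    rcases honly k hk with rfl | rfl
    · have h₀ := hz₀.edge_pos hx₀ hi hκ honly
      have h₁ := hz₁.edge_pos hx₁ hi hκ honly
      rw [mul_assoc] at h₀ h₁
      exact mul_pos_of_mul_pos_of_mul_pos h₁ h₀
    · have h₀ := hz₀.edge_pos hx₀ hj hκ' honly'
      have h₁ := hz₁.edge_pos hx₁ hj hκ' honly'
      rw [mul_assoc] at h₀ h₁
      exact mul_pos_of_mul_pos_of_mul_pos h₁ h₀
  set γ : ℝ → ℝ² := fun t => z + t • (x₀ - z)
  have hγ : Tendsto γ (𝓝[>] 0) (𝓝 z) := by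
    have : Continuous γ := by fun_prop
    simpa [γ] using (this.tendsto 0).mono_left nhdsWithin_le_nhds
  have hγk : ∀ t k, cross (h k) (γ t - z) = t * cross (h k) (x₀ - z) := fun t k => by
    simp only [γ, add_sub_cancel_left, map_smul, smul_eq_mul]
  obtain ⟨t, ht₀, ht₁, htpos⟩ :=
    ((hγ.eventually (eventually_mem_connectedComponentIn hx₀ hz₀.1)).and
      ((hγ.eventually (eventually_mem_connectedComponentIn hx₁ hz₁.1)).and
        self_mem_nhdsWithin)).exists
  have htpos : (0 : ℝ) < t := htpos
  rw [connectedComponentIn_eq (ht₀ fun k hk => ?_),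
    connectedComponentIn_eq (ht₁ fun k hk => ?_)]
  · rw [hγk, mul_left_comm]
    exact mul_pos htpos (hside k hk)
  · rw [hγk, mul_left_comm]
    exact mul_pos htpos (mul_self_pos.2 (cross_sub_ne_zero hx₀ hk))

lemma exists_pos_mem_closure_connectedComponentIn {z e : ℝ²}
    (he : ∀ k, z ∈ lineLift (h k) (p k) → cross (h k) e ≠ 0) :
    ∃ t : ℝ, 0 < t ∧ z + t • e ∈ complLift h p ∧
      z ∈ closure (connectedComponentIn (complLift h p) (z + t • e)) := by
  set γ : ℝ → ℝ² := fun t => z + t • e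
  have hγ : Continuous γ := by fun_prop
  have hγz : Tendsto γ (𝓝[>] 0) (𝓝 z) := by
    simpa [γ] using (hγ.tendsto 0).mono_left nhdsWithin_le_nhds
  have hU : ∀ᶠ t in 𝓝[>] 0, γ t ∈ complLift h p := by
    filter_upwards [hγz.eventually (eventually_mem_lineLift_imp h p z), self_mem_nhdsWithin]
      with t ht (htpos : 0 < t)
    refine fun hl => ?_
    obtain ⟨k, hk⟩ := mem_iUnion.1 hl
    obtain ⟨hzk, h0⟩ := ht k hk
    simp only [γ, add_sub_cancel_left, map_smul, smul_eq_mul] at h0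
    exact mul_ne_zero htpos.ne' (he k hzk) h0
  obtain ⟨δ, hδ, hδU⟩ := mem_nhdsGT_iff_exists_Ioo_subset.1 hU
  have hδ' : δ / 2 ∈ Ioo 0 δ := ⟨half_pos hδ, half_lt_self hδ⟩
  have hseg : γ '' Ioo 0 δ ⊆ connectedComponentIn (complLift h p) (γ (δ / 2)) :=
    (isPreconnected_Ioo.image γ hγ.continuousOn).subset_connectedComponentIn
      (mem_image_of_mem γ hδ') (image_subset_iff.2 hδU)
  exact ⟨δ / 2, hδ'.1, hδU hδ', mem_closure_of_tendsto hγz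
    (mem_of_superset (Ioo_mem_nhdsGT hδ) (image_subset_iff.1 hseg))⟩

lemma exists_isLowestPoint_of_mem_vertexLift (hgp : GeneralPosition h p) {z : ℝ²}
    (hz : z ∈ vertexLift h p) :
    ∃ x₀ ∈ complLift h p, IsLowestPoint (connectedComponentIn (complLift h p) x₀) z := by
  obtain ⟨i, j, hij, hi, hj⟩ := hz
  obtain ⟨hκ, honly⟩ := hgp z i j hij hi hj
  have hκ' : cross (h j) (intVec (h i)) ≠ 0 := by rw [cross_intVec_comm]; exact neg_ne_zero.2 hκ
  have hHi := height_intVec_ne_zero (ne_zero_of_cross_intVec_ne_zero hκ')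
  have hHj := height_intVec_ne_zero (ne_zero_of_cross_intVec_ne_zero hκ)
  -- leave `z` into the quadrant both of whose edges go up
  set e := height (intVec (h j)) • intVec (h j) + height (intVec (h i)) • intVec (h i)
  have hei : cross (h i) e = height (intVec (h j)) * cross (h i) (intVec (h j)) := by
    simp [e, map_smul]
  have hej : cross (h j) e = height (intVec (h i)) * cross (h j) (intVec (h i)) := by
    simp [e, map_smul]
  obtain ⟨t, ht, hx₀, hzC⟩ := exists_pos_mem_closure_connectedComponentIn (e := e)
    fun k hk => by
      rcases honly k hk with rfl | rfl
      · rw [hei]; exact mul_ne_zero hHj hκ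
      · rw [hej]; exact mul_ne_zero hHi hκ'
  refine ⟨z + t • e, hx₀, hzC, isMinOn_iff.2 fun x hx => ?_⟩
  rcases eq_or_ne x z with rfl | hxz
  · exact le_rfl
  have hx₀z : ∀ k, cross (h k) (z + t • e - z) = t * cross (h k) e := fun k => by
    rw [add_sub_cancel_left, map_smul, smul_eq_mul]
  refine (lt_height_of_edge_pos hx₀ hi hj hκ ?_ ?_ hx hxz).le
  · rw [hx₀z, hei, show ∀ a b c : ℝ, a * (b * c) * c * b = a * ((b * c) * (b * c)) by
      intros; ring]
    exact mul_pos ht (mul_self_pos.2 (mul_ne_zero hHj hκ))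
  · rw [hx₀z, hej, show ∀ a b c : ℝ, a * (b * c) * c * b = a * ((b * c) * (b * c)) by
      intros; ring]
    exact mul_pos ht (mul_self_pos.2 (mul_ne_zero hHi hκ'))

lemma finite_vertexLift_inter (hgp : GeneralPosition h p) {K : Set ℝ²} (hK : IsCompact K) :
    (vertexLift h p ∩ K).Finite := by
  refine Finite.subset (s := ⋃ i, ⋃ j, ⋃ (_ : i ≠ j),
      lineLift (h i) (p i) ∩ lineLift (h j) (p j) ∩ K)
    (finite_iUnion fun i => finite_iUnion fun j => finite_iUnion fun hij => ?_) ?_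
  · rcases (lineLift (h i) (p i) ∩ lineLift (h j) (p j) ∩ K).eq_empty_or_nonempty with
      he | ⟨z, ⟨hi, hj⟩, -⟩
    · rw [he]; exact finite_empty
    · exact finite_lineLift_inter_lineLift_inter (hgp z i j hij hi hj).1 _ _ hK
  · rintro z ⟨⟨i, j, hij, hi, hj⟩, hz⟩
    exact mem_iUnion₂.2 ⟨i, j, mem_iUnion.2 ⟨hij, ⟨hi, hj⟩, hz⟩⟩

lemma image_connectedComponentIn_complLift {V : Set Torus2}
    (hV : torusMk ⁻¹' V = complLift h p) {x₀ : ℝ²} (hx₀ : x₀ ∈ complLift h p) :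
    torusMk '' connectedComponentIn (complLift h p) x₀ =
      connectedComponentIn V (torusMk x₀) := by
  have hVo : IsOpen V := (QuotientAddGroup.isQuotientMap_mk _).isOpen_preimage.1
    (hV ▸ isOpen_complLift h p)
  rw [← hV] at hx₀ ⊢
  exact QuotientAddGroup.image_connectedComponentIn_preimage hVo hx₀

lemma biUnique_isLowestVertex (hgp : GeneralPosition h p) {V : Set Torus2}
    (hV : torusMk ⁻¹' V = complLift h p) : Relator.BiUnique (IsLowestVertex h p) := by
  refine ⟨?_, ?_⟩
  · rintro _ _ D ⟨x₀, hx₀, z, hz, rfl, rfl⟩ ⟨x₁, hx₁, z', hz', rfl, hD⟩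
    have hx₁D : torusMk x₁ ∈ torusMk '' connectedComponentIn (complLift h p) x₀ :=
      hD ▸ mem_image_of_mem _ (mem_connectedComponentIn hx₁)
    obtain ⟨w, hw, hC⟩ : ∃ w ∈ intLattice, connectedComponentIn (complLift h p) x₁ =
        w +ᵥ connectedComponentIn (complLift h p) x₀ := by
      rw [← hV] at hx₁D ⊢
      exact QuotientAddGroup.exists_connectedComponentIn_eq_vadd hx₁D
    rw [← IsLowestPoint.eq hgp hx₁ hz' (hC ▸ hz.vadd w), torusMk_add_of_mem hw]
  · rintro _ _ _ ⟨x₀, hx₀, z, hz, rfl, rfl⟩ ⟨x₁, hx₁, z', hz', hzz', rfl⟩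
    have hw : z' - z ∈ intLattice := torusMk_eq_torusMk.1 hzz'.symm
    have hwx₀ : z' - z + x₀ ∈ complLift h p := by
      rw [← hV] at hx₀ ⊢
      rwa [mem_preimage, torusMk_add_of_mem hw]
    have hC : connectedComponentIn (complLift h p) (z' - z + x₀) =
        (z' - z) +ᵥ connectedComponentIn (complLift h p) x₀ := by
      rw [← hV] at hx₀ ⊢
      exact (QuotientAddGroup.vadd_connectedComponentIn_preimage hw hx₀).symm
    have hz'' := hz.vadd (z' - z)
    rw [← hC, sub_add_cancel] at hz''
    rw [← connectedComponentIn_eq_of_isLowestPoint hgp hwx₀ hx₁ hz'' hz', hC]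
    exact (QuotientAddGroup.image_vadd_of_mem hw _).symm

lemma exists_bijOn_image_vertexLift (hgp : GeneralPosition h p) {i j : ι}
    (hij : cross (h i) (intVec (h j)) ≠ 0) {V : Set Torus2}
    (hV : torusMk ⁻¹' V = complLift h p) :
    ∃ f : Torus2 → Set Torus2, BijOn f (torusMk '' vertexLift h p)
      {s | ∃ x ∈ V, s = connectedComponentIn V x} := by
  refine (biUnique_isLowestVertex hgp hV).exists_bijOn ?_ ?_
  · rintro _ ⟨z, hz, rfl⟩
    obtain ⟨x₀, hx₀, hzlow⟩ := exists_isLowestPoint_of_mem_vertexLift hgp hz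
    exact ⟨_, ⟨torusMk x₀, show x₀ ∈ torusMk ⁻¹' V by rwa [hV],
      image_connectedComponentIn_complLift hV hx₀⟩, x₀, hx₀, z, hzlow, rfl, rfl⟩
  · rintro _ ⟨u, hu, rfl⟩
    obtain ⟨x₀, rfl⟩ := torusMk_surjective u
    have hx₀ : x₀ ∈ complLift h p := by rw [← hV]; exact hu
    obtain ⟨z, hz⟩ := exists_isLowestPoint hij hx₀
    exact ⟨torusMk z, mem_image_of_mem _ (hz.mem_vertexLift hx₀), x₀, hx₀, z, hz, rfl,
      image_connectedComponentIn_complLift hV hx₀⟩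

variable {L : ι → Set Torus2}

lemma finite_vertices (hL : ∀ i, torusMk ⁻¹' L i = lineLift (h i) (p i))
    (hgp : GeneralPosition h p) : {x | ∃ i j, i ≠ j ∧ x ∈ L i ∧ x ∈ L j}.Finite := by
  refine ((finite_vertexLift_inter hgp (isCompact_Icc (a := 0) (b := 1))).image torusMk).subset ?_
  rintro v ⟨i, j, hij, hi, hj⟩
  obtain ⟨y, hy, rfl⟩ := exists_mem_Icc_torusMk_eq v
  rw [← mem_preimage, hL] at hi hj
  exact ⟨y, ⟨⟨i, j, hij, hi, hj⟩, hy⟩, rfl⟩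

lemma generalPosition_of_preimage (hL : ∀ i, torusMk ⁻¹' L i = lineLift (h i) (p i))
    (hprim : ∀ i, Int.gcd (h i 0) (h i 1) = 1)
    (hthree : ∀ x : Torus2, {i | x ∈ L i}.ncard ≤ 2)
    (hpar : ∀ i j, i ≠ j → (h i = h j ∨ h i = -h j) → Disjoint (L i) (L j)) :
    GeneralPosition h p := by
  intro z i j hij hi hj
  rw [← hL] at hi hj
  refine ⟨cross_intVec_ne_zero (hprim i) (hprim j) (fun he => ?_) (fun he => ?_),
    fun k hk => ?_⟩
  · exact disjoint_left.1 (hpar i j hij (.inl he)) hi hj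
  · exact disjoint_left.1 (hpar i j hij (.inr he)) hi hj
  rw [← hL] at hk
  by_contra! hk'
  have h3 : ({i, j, k} : Set ι).ncard = 3 :=
    Set.ncard_eq_three.2 ⟨i, j, k, hij, hk'.1.symm, hk'.2.symm, rfl⟩
  have hle := Set.ncard_le_ncard (s := {i, j, k}) (t := {l | torusMk z ∈ L l})
    (by rintro l (rfl | rfl | rfl) <;> assumption) (Set.toFinite _)
  linarith [hthree (torusMk z)]

end Arrangement

end TorusArrangement

open TorusArrangement

/-- For a line arrangement in general position on the torus, the number
of intersection points equals the number of connected components of the complement. -/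
theorem stmt_3 (n : ℕ) (h : Fin n → Fin 2 → ℤ) (p : Fin n → Fin 2 → ℝ)
    (L : Fin n → Set Torus2) (hL : ∀ i, L i = torusGeodesic (p i) (h i))
    (hprim : ∀ i, Int.gcd (h i 0) (h i 1) = 1)
    (hthree : ∀ x : Torus2, {i : Fin n | x ∈ L i}.ncard ≤ 2)
    (hpar : ∀ i j, i ≠ j → (h i = h j ∨ h i = -h j) → Disjoint (L i) (L j))
    (hnpar : ∃ i j, h i ≠ h j ∧ h i ≠ -h j) :
    {x : Torus2 | ∃ i j, i ≠ j ∧ x ∈ L i ∧ x ∈ L j}.Finite ∧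
    {s : Set Torus2 | ∃ x ∈ (⋃ i, L i)ᶜ, s = connectedComponentIn (⋃ i, L i)ᶜ x}.Finite ∧
    {x : Torus2 | ∃ i j, i ≠ j ∧ x ∈ L i ∧ x ∈ L j}.ncard =
      {s : Set Torus2 | ∃ x ∈ (⋃ i, L i)ᶜ, s = connectedComponentIn (⋃ i, L i)ᶜ x}.ncard := by
  have hpre : ∀ i, torusMk ⁻¹' L i = lineLift (h i) (p i) := fun i => by
    rw [hL i, preimage_torusGeodesic (hprim i)]
  have hgp := generalPosition_of_preimage hpre hprim hthree hpar
  obtain ⟨i₀, j₀, hne, hne'⟩ := hnpar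
  obtain ⟨f, hf⟩ := exists_bijOn_image_vertexLift hgp
    (cross_intVec_ne_zero (hprim i₀) (hprim j₀) hne hne') (V := (⋃ i, L i)ᶜ)
    (by simp only [preimage_compl, preimage_iUnion, hpre, complLift])
  rw [image_vertexLift hpre] at hf
  have hfin := finite_vertices hpre hgp
  exact ⟨hfin, hf.image_eq ▸ hfin.image f, hf.ncard_eq⟩
end

section
/- Let α₁, α₂, α₃ ∈ ℤ² and c = (c₁, c₂, c₃) ∈ ℝ³. Let e = (α₁₁, α₂₁, α₃₁) ∈ ℤ³ and f = (α₁₂, α₂₂, α₃₂) ∈ ℤ³ be the two columns of the 3×2 integer matrix whose rows are α₁, α₂, α₃, and let ν = e × f ∈ ℤ³ be their cross product. Assume ν ≠ 0. Then there exists a point x ∈ ℝ² with ⟨x, αᵢ⟩ − cᵢ ∈ ℤ for all i = 1, 2, 3 (i.e. the three torus lines with normals αᵢ and parameters cᵢ have a common point on ℝ²/ℤ²) if and only if c₁ν₁ + c₂ν₂ + c₃ν₃ ∈ gcd(ν₁, ν₂, ν₃)·ℤ. -/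
/-!
Write `e, f` for the columns of the matrix of normals and `ν = e × f`. A common point `x`
means that `c + k = x₀ e + x₁ f` for some `k ∈ ℤ³`. Since `ν ≠ 0`, the vectors `e, f` span
exactly the orthogonal complement of `ν`, so this says `(c + k) ⬝ ν = 0`, i.e. `c ⬝ ν` lies in
`{k ⬝ ν : k ∈ ℤ³}`, which by Bézout is `gcd(ν₁, ν₂, ν₃) ℤ`.
-/

open Matrix

theorem RingHom.comp_crossProduct {R S : Type*} [CommRing R] [CommRing S] (φ : R →+* S)
    (u v : Fin 3 → R) : φ ∘ (u ⨯₃ v) = (φ ∘ u) ⨯₃ (φ ∘ v) := by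
  ext i
  fin_cases i <;> simp [cross_apply]

theorem exists_smul_add_smul_eq_iff_dotProduct_cross_eq_zero {K : Type*} [Field K]
    {e f : Fin 3 → K} (hef : e ⨯₃ f ≠ 0) (b : Fin 3 → K) :
    (∃ s t : K, s • e + t • f = b) ↔ b ⬝ᵥ e ⨯₃ f = 0 := by
  constructor
  · rintro ⟨s, t, rfl⟩
    simp [add_dotProduct, dot_self_cross, dot_cross_self]
  · intro hb
    have hdet : (Matrix.of ![e, f, b]).det = 0 := by
      rw [← hb, triple_product_permutation, triple_product_eq_det]
      rfl
    obtain ⟨v, hv, hvM⟩ := Matrix.exists_vecMul_eq_zero_iff.mpr hdet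
    have hcomb : v 0 • e + v 1 • f + v 2 • b = 0 := by
      simpa [vecMul_cons, vecHead, vecTail, add_assoc] using hvM
    have hindep : LinearIndependent K ![e, f] :=
      crossProduct_ne_zero_iff_linearIndependent.mp hef
    have hv2 : v 2 ≠ 0 := by
      intro hv2
      obtain ⟨h0, h1⟩ := LinearIndependent.pair_iff.mp hindep (v 0) (v 1)
        (by simpa [hv2] using hcomb)
      exact hv (by ext i; fin_cases i <;> assumption)
    rw [add_eq_zero_iff_eq_neg', eq_comm, ← inv_smul_eq_iff₀ hv2] at hcomb
    refine ⟨-(v 0 / v 2), -(v 1 / v 2), ?_⟩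
    rw [← hcomb]
    module

theorem Int.gcd_gcd_dvd_iff_exists_dotProduct (ν : Fin 3 → ℤ) (z : ℤ) :
    ((Int.gcd (Int.gcd (ν 0) (ν 1)) (ν 2) : ℤ) ∣ z ↔ ∃ w : Fin 3 → ℤ, w ⬝ᵥ ν = z) := by
  rw [Int.coe_gcd, Int.coe_gcd, gcd_dvd_iff_exists]
  constructor
  · rintro ⟨x, y, rfl⟩
    obtain ⟨a, b, hab⟩ := exists_gcd_eq_mul_add_mul (ν 0) (ν 1)
    refine ⟨![a * x, b * x, y], ?_⟩
    rw [hab, vec3_dotProduct]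
    simp only [cons_val_zero, cons_val_one, cons_val]
    ring
  · rintro ⟨w, rfl⟩
    obtain ⟨x, hx⟩ := (gcd_dvd_iff_exists (ν 0) (ν 1)).mpr ⟨w 0, w 1, rfl⟩
    refine ⟨x, w 2, ?_⟩
    rw [vec3_dotProduct, ← hx]
    ring

theorem exists_add_intCast_dotProduct_eq_zero_iff {R : Type*} [CommRing R] (c : Fin 3 → R)
    (ν : Fin 3 → ℤ) :
    (∃ k : Fin 3 → ℤ, (c + (Int.cast ∘ k)) ⬝ᵥ (Int.cast ∘ ν) = 0) ↔
      ∃ m : ℤ, c ⬝ᵥ (Int.cast ∘ ν) = m * (Int.gcd (Int.gcd (ν 0) (ν 1)) (ν 2) : R) := by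
  have hcast (w : Fin 3 → ℤ) : ((w ⬝ᵥ ν : ℤ) : R) = (Int.cast ∘ w) ⬝ᵥ (Int.cast ∘ ν) :=
    (Int.castRingHom R).map_dotProduct w ν
  simp_rw [add_dotProduct, add_eq_zero_iff_eq_neg]
  constructor
  · rintro ⟨k, hk⟩
    obtain ⟨m, hm⟩ := (Int.gcd_gcd_dvd_iff_exists_dotProduct ν _).mpr ⟨k, rfl⟩
    refine ⟨-m, ?_⟩
    rw [hk, ← hcast, hm]
    push_cast
    ring
  · rintro ⟨m, hm⟩
    obtain ⟨w, hw⟩ := (Int.gcd_gcd_dvd_iff_exists_dotProduct ν _).mp (dvd_mul_left _ m)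
    refine ⟨-w, ?_⟩
    rw [hm, ← hcast, neg_dotProduct, hw]
    push_cast
    ring

theorem exists_common_point_iff_exists_smul_add_smul (α : Fin 3 → Fin 2 → ℤ) (c : Fin 3 → ℝ) :
    (∃ x : Fin 2 → ℝ, ∀ i : Fin 3, ∃ k : ℤ, (∑ j, x j * (α i j : ℝ)) - c i = k) ↔
      ∃ k : Fin 3 → ℤ, ∃ s t : ℝ,
        s • (fun i => (α i 0 : ℝ)) + t • (fun i => (α i 1 : ℝ)) = c + Int.cast ∘ k := by
  constructor
  · rintro ⟨x, hx⟩
    choose k hk using hx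
    refine ⟨k, x 0, x 1, funext fun i => ?_⟩
    simp only [Fin.sum_univ_two] at hk
    simp [← hk i]
  · rintro ⟨k, s, t, h⟩
    refine ⟨![s, t], fun i => ⟨k i, ?_⟩⟩
    have hi := congrFun h i
    simp only [Pi.add_apply, Pi.smul_apply, Function.comp_apply, smul_eq_mul] at hi
    simp [Fin.sum_univ_two, hi]

/-- Three torus lines with integer normals `α i` and parameters `c i`
have a common point on `ℝ²/ℤ²` iff `⟨c, ν⟩ ∈ gcd(ν)·ℤ`, where `ν = e × f` is the cross
product of the two columns of the `3×2` integer matrix with rows `α 0, α 1, α 2`. -/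
theorem stmt_6 (α : Fin 3 → Fin 2 → ℤ) (c : Fin 3 → ℝ) (e f ν : Fin 3 → ℤ)
    (he : e = fun i => α i 0) (hf : f = fun i => α i 1)
    (hν : ν = ![e 1 * f 2 - e 2 * f 1, e 2 * f 0 - e 0 * f 2, e 0 * f 1 - e 1 * f 0])
    (hne : ν ≠ 0) :
    (∃ x : Fin 2 → ℝ, ∀ i : Fin 3, ∃ k : ℤ, (∑ j, x j * (α i j : ℝ)) - c i = (k : ℝ)) ↔
      ∃ k : ℤ, c 0 * (ν 0 : ℝ) + c 1 * (ν 1 : ℝ) + c 2 * (ν 2 : ℝ) =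
        (k : ℝ) * (Int.gcd (Int.gcd (ν 0) (ν 1)) (ν 2) : ℝ) := by
  have hcross :
      (Int.cast ∘ ν : Fin 3 → ℝ) = (fun i => (α i 0 : ℝ)) ⨯₃ (fun i => (α i 1 : ℝ)) := by
    subst hν he hf
    exact (Int.castRingHom ℝ).comp_crossProduct (fun i => α i 0) (fun i => α i 1)
  have hcross_ne : (fun i => (α i 0 : ℝ)) ⨯₃ (fun i => (α i 1 : ℝ)) ≠ 0 := by
    rw [← hcross]
    exact fun h => hne (funext fun i => by simpa using congrFun h i)
  simp_rw [exists_common_point_iff_exists_smul_add_smul,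
    exists_smul_add_smul_eq_iff_dotProduct_cross_eq_zero hcross_ne, ← hcross,
    exists_add_intCast_dotProduct_eq_zero_iff, vec3_dotProduct, Function.comp_apply]
end

section
/- Let n ≥ 1 and let h₁, …, hₙ ∈ ℤ² be primitive vectors (each nonzero with gcd of coordinates equal to 1) such that h₁ + ⋯ + hₙ = 0. Suppose the vectors are ordered by angle: θ(h₁) ≤ θ(h₂) ≤ ⋯ ≤ θ(hₙ), where θ(v) ∈ [0, 2π) denotes the counterclockwise angle of the nonzero vector v measured from the positive x-axis. Define the partial sums v₀ = (0,0) and vᵢ = v_{i−1} + hᵢ for i = 1, …, n. Then every point vᵢ lies on the frontier (topological boundary) of the convex hull of {v₀, v₁, …, vₙ} in ℝ², i.e. the partial sums are the boundary lattice path of a convex lattice polygon. -/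
/-!
Fix `m` and a cut angle `φ` with `θ j ≤ φ` for `j < m` and `φ ≤ θ j` for `j ≥ m`, and pair with
the unit normal `(sin φ, -cos φ)`; this sends `h j` to `-‖h j‖ sin (θ j - φ)`. Along the edges in
the cyclic order `m, m + 1, …, m - 1` the angles `θ j - φ` (shifted by `2π` for `j < m`) increase
within `[0, 2π]`, so these values change sign only once, from `≤ 0` to `≥ 0`. They sum to zero,
hence every cyclic partial sum started at `m` is `≤ 0`: the vertex `v m` maximises a nonzero linear
functional on the convex hull, so it is not an interior point.
-/

open Real Finset

theorem mem_frontier_convexHull_of_forall_le {E : Type*} [NormedAddCommGroup E]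
    [NormedSpace ℝ E] {s : Set E} {x : E} (hx : x ∈ s) (l : E →L[ℝ] ℝ) (hl : l ≠ 0)
    (hmax : ∀ y ∈ s, l y ≤ l x) : x ∈ frontier (convexHull ℝ s) := by
  have hmaxOn : IsMaxOn l (convexHull ℝ s) x :=
    convexHull_min hmax (convex_halfSpace_le l.isLinear _)
  refine ⟨subset_closure (subset_convexHull ℝ s hx), fun hint => hl ?_⟩
  rw [← l.fderiv (x := x)]
  exact (hmaxOn.isLocalMax (mem_interior_iff_mem_nhds.mp hint)).fderiv_eq_zero

theorem Real.sin_nonpos_of_sin_neg_of_le {a b : ℝ} (ha : 0 ≤ a) (hab : a ≤ b)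
    (hb : b ≤ 2 * π) (h : sin a < 0) : sin b ≤ 0 := by
  have hπa : π < a := by
    by_contra! hle
    exact h.not_ge (sin_nonneg_of_nonneg_of_le_pi ha hle)
  have := sin_nonneg_of_nonneg_of_le_pi (x := b - π) (by linarith) (by linarith)
  rw [sin_sub_pi] at this
  linarith

theorem Fin.eq_sum_filter_lt_of_succ {M : Type*} [AddCommMonoid M] {n : ℕ}
    {v : Fin (n + 1) → M} {w : Fin n → M} (h0 : v 0 = 0)
    (hs : ∀ i : Fin n, v i.succ = v i.castSucc + w i) (k : Fin (n + 1)) :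
    v k = ∑ j ∈ univ.filter (fun j : Fin n => (j : ℕ) < k), w j := by
  induction k using Fin.induction with
  | zero => simp [h0]
  | succ i ih =>
    have hsplit : univ.filter (fun j : Fin n => (j : ℕ) < i.succ)
        = insert i (univ.filter fun j : Fin n => (j : ℕ) < i.castSucc) := by
      ext j; simp only [mem_filter, mem_univ, true_and, mem_insert, Fin.val_succ,
        Fin.val_castSucc, Fin.ext_iff]; omega
    rw [hs, ih, hsplit, sum_insert (by simp), add_comm]

theorem Finset.sum_nonpos_of_pos_imp_nonneg {ι : Type*} [Fintype ι] [DecidableEq ι]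
    {g : ι → ℝ} (T : Finset ι) (hsum : ∑ i, g i = 0)
    (hsign : ∀ i ∈ T, ∀ j ∉ T, 0 < g i → 0 ≤ g j) : ∑ i ∈ T, g i ≤ 0 := by
  by_cases hpos : ∃ i ∈ T, 0 < g i
  · obtain ⟨i, hiT, hi⟩ := hpos
    have hcompl : 0 ≤ ∑ j ∈ Tᶜ, g j :=
      sum_nonneg fun j hj => hsign i hiT j (mem_compl.mp hj) hi
    linarith [sum_add_sum_compl T g]
  · exact sum_nonpos fun i hi => not_lt.mp fun h => hpos ⟨i, hi, h⟩

/-- The order `m, m + 1, m + 2, …, 0, 1, …, m - 1` on indices: the cyclic order started at `m`. -/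
def RotLE (m i j : ℕ) : Prop :=
  (m ≤ i ∧ (j < m ∨ i ≤ j)) ∨ (i ≤ j ∧ j < m)

theorem sum_filter_lt_le_of_rotLE_sign {n m : ℕ} {g : Fin n → ℝ} (hsum : ∑ j, g j = 0)
    (hsign : ∀ i j : Fin n, RotLE m i j → 0 < g i → 0 ≤ g j) (k : ℕ) :
    ∑ j ∈ univ.filter (fun j : Fin n => (j : ℕ) < k), g j
      ≤ ∑ j ∈ univ.filter (fun j : Fin n => (j : ℕ) < m), g j := by
  set P : ℕ → Finset (Fin n) := fun k => univ.filter fun j => (j : ℕ) < k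
  have hP : ∀ {k j}, j ∈ P k ↔ (j : ℕ) < k := by simp [P]
  rcases le_total m k with hmk | hkm
  · have hsplit := sum_sdiff (f := g) (fun j hj => hP.mpr (lt_of_lt_of_le (hP.mp hj) hmk) :
      P m ⊆ P k)
    have := sum_nonpos_of_pos_imp_nonneg (P k \ P m) hsum fun i hi j hj => by
      simp only [mem_sdiff, hP] at hi hj
      exact hsign i j (by unfold RotLE; omega)
    linarith
  · have hsplit := sum_sdiff (f := g) (fun j hj => hP.mpr (lt_of_lt_of_le (hP.mp hj) hkm) :
      P k ⊆ P m)
    have := sum_nonpos_of_pos_imp_nonneg (P m \ P k)ᶜ hsum fun i hi j hj => by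
      simp only [mem_compl, mem_sdiff, hP, not_and, not_not] at hi hj
      exact hsign i j (by unfold RotLE; omega)
    linarith [sum_add_sum_compl (P m \ P k) g]

section Angles

variable {n m : ℕ} {θ : Fin n → ℝ} {φ : ℝ}

theorem exists_angle_between (hθ : ∀ j, θ j ∈ Set.Ico 0 (2 * π)) (hmono : Monotone θ)
    (hm : m ≤ n) : ∃ φ ∈ Set.Ico 0 (2 * π),
      (∀ j : Fin n, (j : ℕ) < m → θ j ≤ φ) ∧ ∀ j : Fin n, m ≤ j → φ ≤ θ j := by
  cases m with
  | zero => exact ⟨0, ⟨le_rfl, two_pi_pos⟩, by simp, fun j _ => (hθ j).1⟩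
  | succ k =>
    exact ⟨θ ⟨k, hm⟩, hθ _, fun j hj => hmono (Fin.le_def.mpr (Nat.lt_succ_iff.mp hj)),
      fun j hj => hmono (Fin.le_def.mpr (Nat.le_of_succ_le hj))⟩

theorem sin_sub_nonpos_of_rotLE (hθ : ∀ j, θ j ∈ Set.Ico 0 (2 * π)) (hmono : Monotone θ)
    (hφ : φ ∈ Set.Ico 0 (2 * π)) (hlow : ∀ j : Fin n, (j : ℕ) < m → θ j ≤ φ)
    (hhigh : ∀ j : Fin n, m ≤ j → φ ≤ θ j) {i j : Fin n} (hij : RotLE m i j)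
    (hi : sin (θ i - φ) < 0) : sin (θ j - φ) ≤ 0 := by
  set ψ : Fin n → ℝ := fun x => θ x - φ + if (x : ℕ) < m then 2 * π else 0
  have hsin : ∀ x, sin (θ x - φ) = sin (ψ x) := fun x => by
    simp only [ψ]; split_ifs <;> simp
  have hψ : ∀ x, 0 ≤ ψ x ∧ ψ x ≤ 2 * π := fun x => by
    obtain ⟨hθ0, hθ2⟩ := hθ x
    obtain ⟨hφ0, hφ2⟩ := hφ
    simp only [ψ]; split_ifs with hx
    · have := hlow x hx; constructor <;> linarith
    · have := hhigh x (not_lt.mp hx); constructor <;> linarith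
  have hψij : ψ i ≤ ψ j := by
    obtain ⟨-, hθi⟩ := hθ i
    obtain ⟨hθj, -⟩ := hθ j
    simp only [ψ]
    rcases hij with ⟨hmi, hjm | hij⟩ | ⟨hij, hjm⟩
    · rw [if_neg (not_lt.mpr hmi), if_pos hjm]; linarith
    · rw [if_neg (not_lt.mpr hmi), if_neg (not_lt.mpr (hmi.trans hij))]
      linarith [hmono (Fin.le_def.mpr hij)]
    · rw [if_pos (lt_of_le_of_lt hij hjm), if_pos hjm]
      linarith [hmono (Fin.le_def.mpr hij)]
  rw [hsin] at hi ⊢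
  exact sin_nonpos_of_sin_neg_of_le (hψ i).1 hψij (hψ j).2 hi

end Angles

noncomputable def normalFunctional (φ : ℝ) : (Fin 2 → ℝ) →L[ℝ] ℝ :=
  sin φ • ContinuousLinearMap.proj 0 - cos φ • ContinuousLinearMap.proj 1

theorem normalFunctional_smul_cos_sin (φ r θ : ℝ) :
    normalFunctional φ (r • ![cos θ, sin θ]) = -(r * sin (θ - φ)) := by
  change sin φ * (r * cos θ) - cos φ * (r * sin θ) = _
  rw [sin_sub]
  ring

theorem normalFunctional_ne_zero (φ : ℝ) : normalFunctional φ ≠ 0 := by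
  intro h
  have h1 : sin φ * sin φ - cos φ * -cos φ = 0 := congrArg (· ![sin φ, -cos φ]) h
  nlinarith [sin_sq_add_cos_sq φ]

open Real in
theorem stmt_8_general (n : ℕ) (h : Fin n → Fin 2 → ℤ)
    (hsum : ∑ i, h i = 0)
    (θ : Fin n → ℝ)
    (hθmem : ∀ i, θ i ∈ Set.Ico 0 (2 * π))
    (hθdir : ∀ i, (fun j => (h i j : ℝ)) =
      Real.sqrt ((h i 0 : ℝ) ^ 2 + (h i 1 : ℝ) ^ 2) • ![Real.cos (θ i), Real.sin (θ i)])
    (hmono : Monotone θ)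
    (v : Fin (n + 1) → Fin 2 → ℝ)
    (hv0 : v 0 = 0)
    (hvi : ∀ i : Fin n, v i.succ = v i.castSucc + fun j => (h i j : ℝ)) :
    ∀ i, v i ∈ frontier (convexHull ℝ (Set.range v)) := by
  intro i
  obtain ⟨φ, hφ, hlow, hhigh⟩ := exists_angle_between hθmem hmono i.is_le
  set r : Fin n → ℝ := fun j => √((h j 0 : ℝ) ^ 2 + (h j 1 : ℝ) ^ 2)
  set l := normalFunctional φ
  have hl : ∀ k, l (v k) = ∑ j ∈ univ.filter (fun j : Fin n => (j : ℕ) < k),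
      -(r j * sin (θ j - φ)) := fun k => by
    simp only [Fin.eq_sum_filter_lt_of_succ hv0 hvi k, map_sum, hθdir, l,
      normalFunctional_smul_cos_sin, r]
  have htotal : ∑ j, -(r j * sin (θ j - φ)) = 0 := by
    have hw : ∑ j, (fun c => (h j c : ℝ)) = 0 := by
      ext c
      rw [Finset.sum_apply, Pi.zero_apply, ← Int.cast_sum, ← Finset.sum_apply, hsum]
      simp
    have := congrArg l hw
    rw [map_sum, map_zero] at this
    simpa only [hθdir, l, normalFunctional_smul_cos_sin] using this
  refine mem_frontier_convexHull_of_forall_le ⟨i, rfl⟩ l (normalFunctional_ne_zero φ) ?_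
  rintro _ ⟨k, rfl⟩
  rw [hl, hl]
  refine sum_filter_lt_le_of_rotLE_sign htotal (fun a b hab hpos => ?_) k
  have hsin_a : sin (θ a - φ) < 0 := by
    by_contra! hnn
    exact hpos.not_ge (neg_nonpos.mpr (mul_nonneg (sqrt_nonneg _) hnn))
  exact neg_nonneg.mpr (mul_nonpos_of_nonneg_of_nonpos (sqrt_nonneg _)
    (sin_sub_nonpos_of_rotLE hθmem hmono hφ hlow hhigh hab hsin_a))

open Real in
/-- Let `h 0, …, h (n-1) ∈ ℤ²` be primitive vectors summing to zero,
ordered by their counterclockwise angle `θ ∈ [0, 2π)` with the positive `x`-axis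
(so `h i = ‖h i‖ • (cos (θ i), sin (θ i))` with `θ` monotone). Then every partial sum
`v i` (with `v 0 = 0` and `v (i+1) = v i + h i`) lies on the frontier of the convex hull
of all the partial sums: the partial sums form the boundary of a convex lattice polygon. -/
theorem stmt_8 (n : ℕ) (hn : 1 ≤ n) (h : Fin n → Fin 2 → ℤ)
    (hprim : ∀ i, Int.gcd (h i 0) (h i 1) = 1)
    (hsum : ∑ i, h i = 0)
    (θ : Fin n → ℝ)
    (hθmem : ∀ i, θ i ∈ Set.Ico 0 (2 * π))
    (hθdir : ∀ i, (fun j => (h i j : ℝ)) =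
      Real.sqrt ((h i 0 : ℝ) ^ 2 + (h i 1 : ℝ) ^ 2) • ![Real.cos (θ i), Real.sin (θ i)])
    (hmono : Monotone θ)
    (v : Fin (n + 1) → Fin 2 → ℝ)
    (hv0 : v 0 = 0)
    (hvi : ∀ i : Fin n, v i.succ = v i.castSucc + fun j => (h i j : ℝ)) :
    ∀ i, v i ∈ frontier (convexHull ℝ (Set.range v)) :=
  stmt_8_general n h hsum θ hθmem hθdir hmono v hv0 hvi
end
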